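/- arXiv:1204.1961 — 3 statements merged into one kernel-verified Lean document; each statement's English description precedes it below -/
import Mathlib

section
/- Every finite simple graph on n ≥ 3 vertices with minimum degree δ ≥ n/2 contains a Hamilton cycle. -/
open SimpleGraph

variable {V : Type*}

/-- `G` is `k`-connected: more than `k` vertices and removing fewer than `k`
vertices leaves a connected graph. -/
def KConnected (G : SimpleGraph V) [Fintype V] [DecidableEq V] (k : ℕ) : Prop :=
  k < Fintype.card V ∧
    ∀ S : Finset V, S.card < k → (G.induce ((↑S : Set V)ᶜ)).Connected

/-- vertex connectivity `κ`. -/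
noncomputable def connectivity (G : SimpleGraph V) [Fintype V] [DecidableEq V] : ℕ :=
  sSup {k | KConnected G k}

/-- independence number `α`. -/
noncomputable def indepNumber (G : SimpleGraph V) [Fintype V] [DecidableEq V] : ℕ :=
  sSup {k | ∃ s : Finset V, (∀ u ∈ s, ∀ v ∈ s, ¬ G.Adj u v) ∧ s.card = k}

/-- circumference `c`: length of a longest cycle. -/
noncomputable def circumference (G : SimpleGraph V) [Fintype V] [DecidableEq V] : ℕ :=
  sSup {n | ∃ (v : V) (w : G.Walk v v), w.IsCycle ∧ w.length = n}

/-- `w` is a longest cycle of `G`. -/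
def IsLongestCycle {G : SimpleGraph V} {v : V} (w : G.Walk v v) : Prop :=
  w.IsCycle ∧ ∀ (u : V) (w' : G.Walk u u), w'.IsCycle → w'.length ≤ w.length

/-- dominating cycle: every edge has an endpoint on the cycle. -/
def IsDominatingCycle {G : SimpleGraph V} {v : V} (w : G.Walk v v) : Prop :=
  w.IsCycle ∧ ∀ x y, G.Adj x y → x ∈ w.support ∨ y ∈ w.support

/-- generalized cycle of length `n` with vertex set `W`: single vertices are
cycles of length 1, edges are cycles of length 2. -/
def ExtCycle (G : SimpleGraph V) (W : Set V) (n : ℕ) : Prop :=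
  (n = 1 ∧ ∃ v : V, W = {v}) ∨
  (n = 2 ∧ ∃ u v : V, G.Adj u v ∧ W = {u, v}) ∨
  (3 ≤ n ∧ ∃ (v : V) (w : G.Walk v v), w.IsCycle ∧ w.length = n ∧
      W = {x | x ∈ w.support})

/-- `p̄`: the length of a longest path in `G \ C`. -/
noncomputable def pathBar (G : SimpleGraph V) [Fintype V] [DecidableEq V] {v : V} (w : G.Walk v v) : ℕ :=
  sSup {n | ∃ (a b : {x : V | x ∉ w.support})
      (p : (G.induce {x : V | x ∉ w.support}).Walk a b), p.IsPath ∧ p.length = n}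

/-- `c̄`: the length of a longest (generalized) cycle in `G \ C`. -/
noncomputable def cycBar (G : SimpleGraph V) [Fintype V] [DecidableEq V] {v : V} (w : G.Walk v v) : ℕ :=
  sSup {n | ∃ W, ExtCycle (G.induce {x : V | x ∉ w.support}) W n}

/-- `CD_m`-cycle: every (generalized) cycle of length at least `m` meets `w`. -/
def IsCDCycle (G : SimpleGraph V) {v : V} (w : G.Walk v v) (m : ℕ) : Prop :=
  w.IsCycle ∧ ∀ (W : Set V) (n : ℕ), ExtCycle G W n → m ≤ n → ∃ x ∈ W, x ∈ w.support

/-!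
Take a longest path `a ⋯ b` with `k` edges. Every neighbour of `a` or of `b` lies on it, and
`deg a + deg b ≥ n > k`, so pigeonholing over the `k` edges of the path gives an edge `x y` of it,
in this order, with `a ~ y` and `b ~ x`; then `b x ⋯ a y ⋯ b` is a cycle of length `k + 1`. The
graph is connected (two non-adjacent vertices have a common neighbour), so if this cycle missed a
vertex, some edge would leave it, and opening the cycle at that edge would give a path with
`k + 1` edges.
-/

open scoped Finset

namespace SimpleGraph

variable {G : SimpleGraph V}

section Degree

variable [Fintype V] [DecidableRel G.Adj]

lemma exists_adj_adj_of_card_lt_degree_add_degree {u v : V} (huv : u ≠ v) (hadj : ¬G.Adj u v)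
    (h : Fintype.card V < G.degree u + G.degree v + 2) : ∃ w, G.Adj u w ∧ G.Adj w v := by
  classical
  have hsub : ∀ w ∈ ({u, v} : Finset V), G.neighborFinset w ⊆ ({u, v} : Finset V)ᶜ := by
    intro w hw z hz
    rw [mem_neighborFinset] at hz
    simp only [Finset.mem_insert, Finset.mem_singleton] at hw
    simp only [Finset.mem_compl, Finset.mem_insert, Finset.mem_singleton, not_or]
    rcases hw with rfl | rfl
    · exact ⟨hz.ne', fun h => hadj (h ▸ hz)⟩
    · exact ⟨fun h => hadj (h ▸ hz.symm), hz.ne'⟩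
  obtain ⟨w, hw⟩ := Finset.inter_nonempty_of_card_lt_card_add_card (hsub u (by simp))
    (hsub v (by simp)) (by
      have h2 : 2 ≤ Fintype.card V := Finset.card_pair huv ▸ Finset.card_le_univ _
      rw [Finset.card_compl, Finset.card_pair huv, card_neighborFinset_eq_degree,
        card_neighborFinset_eq_degree]
      omega)
  rw [Finset.mem_inter, mem_neighborFinset, mem_neighborFinset] at hw
  exact ⟨w, hw.1, hw.2.symm⟩

lemma preconnected_of_card_le_two_mul_minDegree (h : Fintype.card V ≤ 2 * G.minDegree) :
    G.Preconnected := by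
  intro u v
  rcases eq_or_ne u v with rfl | huv
  · rfl
  by_cases hadj : G.Adj u v
  · exact hadj.reachable
  obtain ⟨w, huw, hwv⟩ := exists_adj_adj_of_card_lt_degree_add_degree huv hadj (by
    have := G.minDegree_le_degree u
    have := G.minDegree_le_degree v
    omega)
  exact huw.reachable.trans hwv.reachable

end Degree

namespace Walk

variable {a b x y : V}

def IsLongestPath (p : G.Walk a b) : Prop :=
  p.IsPath ∧ ∀ (c d : V) (q : G.Walk c d), q.IsPath → q.length ≤ p.length

variable (G) in
lemma exists_isLongestPath [Finite V] [Nonempty V] :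
    ∃ (a b : V) (p : G.Walk a b), p.IsLongestPath := by
  classical
  cases nonempty_fintype V
  let P (m : ℕ) : Prop := ∃ (a b : V) (p : G.Walk a b), p.IsPath ∧ p.length = m
  obtain ⟨a, b, p, hp, hlen⟩ : P (Nat.findGreatest P (Fintype.card V)) :=
    Nat.findGreatest_spec (Nat.zero_le _) ⟨Classical.arbitrary V, _, nil, IsPath.nil, rfl⟩
  exact ⟨a, b, p, hp, fun c d q hq =>
    hlen ▸ Nat.le_findGreatest hq.length_lt.le ⟨c, d, q, hq, rfl⟩⟩

lemma exists_eq_append_cons_of_mem_darts (hxy : G.Adj x y) :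
    ∀ {a b : V} {p : G.Walk a b}, ⟨(x, y), hxy⟩ ∈ p.darts →
      ∃ (q : G.Walk a x) (r : G.Walk y b), p = q.append (cons hxy r)
  | _, _, nil, hd => by simp at hd
  | _, _, cons h p, hd => by
    rcases List.mem_cons.1 hd with hd | hd
    · cases hd
      exact ⟨nil, p, rfl⟩
    · obtain ⟨q, r, rfl⟩ := exists_eq_append_cons_of_mem_darts hxy hd
      exact ⟨cons h q, r, rfl⟩

lemma isCycle_cons_reverse_append_cons {q : G.Walk a x} {r : G.Walk y b} (hxy : G.Adj x y)
    (hp : (q.append (cons hxy r)).IsPath) (hlen : 1 < (q.append (cons hxy r)).length)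
    (hay : G.Adj a y) (hbx : G.Adj b x) :
    (cons hbx (q.reverse.append (cons hay r))).IsCycle := by
  have hw : (q.reverse.append (cons hay r)).IsPath := by
    refine IsPath.mk' ?_
    rw [support_append, support_reverse, support_cons, List.tail_cons]
    refine ((List.reverse_perm _).append_right _).nodup_iff.2 ?_
    simpa [support_append] using hp.support_nodup
  refine (cons_isCycle_iff _ hbx).2 ⟨hw, fun he => ?_⟩
  have := hw.length_eq_one_of_mem_edges (Sym2.eq_swap ▸ he)
  simp only [length_append, length_cons, length_reverse] at this hlen
  omega

lemma card_toFinset_darts_le_length [DecidableEq V] (p : G.Walk a b) :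
    #p.darts.toFinset ≤ p.length :=
  p.length_darts ▸ List.toFinset_card_le _

section Degree

variable [Fintype V] [DecidableRel G.Adj] [DecidableEq V]

lemma degree_le_card_filter_darts_snd {p : G.Walk a b} (h : ∀ z, G.Adj a z → z ∈ p.support) :
    G.degree a ≤ #(p.darts.toFinset.filter (G.Adj a ·.snd)) := by
  rw [← card_neighborFinset_eq_degree]
  refine Finset.card_le_card_of_surjOn (·.snd) fun z hz => ?_
  rw [Finset.mem_coe, mem_neighborFinset] at hz
  have hz' : z ∈ p.darts.map (·.snd) := by
    have := p.cons_map_snd_darts ▸ h z hz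
    exact (List.mem_cons.1 this).resolve_left hz.ne'
  obtain ⟨d, hd, rfl⟩ := List.mem_map.1 hz'
  exact ⟨d, by simpa [hd] using hz, rfl⟩

lemma degree_le_card_filter_darts_fst {p : G.Walk a b} (h : ∀ z, G.Adj b z → z ∈ p.support) :
    G.degree b ≤ #(p.darts.toFinset.filter (G.Adj b ·.fst)) := by
  rw [← card_neighborFinset_eq_degree]
  refine Finset.card_le_card_of_surjOn (·.fst) fun z hz => ?_
  rw [Finset.mem_coe, mem_neighborFinset] at hz
  have hz' : z ∈ p.darts.map (·.fst) := by
    have := p.map_fst_darts_append ▸ h z hz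
    exact (List.mem_append.1 this).resolve_right (by simpa using hz.ne')
  obtain ⟨d, hd, rfl⟩ := List.mem_map.1 hz'
  exact ⟨d, by simpa [hd] using hz, rfl⟩

end Degree

namespace IsLongestPath

variable {p : G.Walk a b}

lemma reverse (hp : p.IsLongestPath) : p.reverse.IsLongestPath :=
  ⟨hp.1.reverse, by simpa using hp.2⟩

lemma mem_support_of_adj_start (hp : p.IsLongestPath) {z : V} (h : G.Adj a z) :
    z ∈ p.support := by
  by_contra hz
  simpa using hp.2 _ _ _ (hp.1.cons (h := h.symm) hz)

lemma mem_support_of_adj_end (hp : p.IsLongestPath) {z : V} (h : G.Adj b z) :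
    z ∈ p.support := by
  simpa using hp.reverse.mem_support_of_adj_start h

section Degree

variable [Fintype V] [DecidableRel G.Adj]

lemma degree_start_le_length (hp : p.IsLongestPath) : G.degree a ≤ p.length := by
  classical
  exact (degree_le_card_filter_darts_snd fun _ => hp.mem_support_of_adj_start).trans
    ((Finset.card_filter_le _ _).trans p.card_toFinset_darts_le_length)

lemma exists_isCycle_length_eq (hp : p.IsLongestPath) (hlen : 1 < p.length)
    (hdeg : p.length < G.degree a + G.degree b) :
    ∃ (u : V) (C : G.Walk u u), C.IsCycle ∧ C.length = p.length + 1 := by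
  classical
  obtain ⟨⟨⟨x, y⟩, hxy⟩, hd⟩ := Finset.inter_nonempty_of_card_lt_card_add_card
    (Finset.filter_subset (G.Adj a ·.snd) p.darts.toFinset)
    (Finset.filter_subset (G.Adj b ·.fst) p.darts.toFinset)
    (calc #p.darts.toFinset ≤ p.length := p.card_toFinset_darts_le_length
      _ < G.degree a + G.degree b := hdeg
      _ ≤ _ := add_le_add (degree_le_card_filter_darts_snd fun _ => hp.mem_support_of_adj_start)
        (degree_le_card_filter_darts_fst fun _ => hp.mem_support_of_adj_end))
  simp only [Finset.mem_inter, Finset.mem_filter, List.mem_toFinset] at hd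
  obtain ⟨⟨hd, hay⟩, -, hbx⟩ := hd
  obtain ⟨q, r, rfl⟩ := exists_eq_append_cons_of_mem_darts hxy hd
  refine ⟨b, _, isCycle_cons_reverse_append_cons hxy hp.1 hlen hay hbx, ?_⟩
  simp only [length_cons, length_append, length_reverse]

end Degree

end IsLongestPath

namespace IsCycle

variable {v w z : V} {C : G.Walk v v}

lemma exists_isPath_length_eq_of_adj (hC : C.IsCycle) (h : G.Adj w v) (hw : w ∉ C.support) :
    ∃ (u : V) (p : G.Walk w u), p.IsPath ∧ p.length = C.length := by
  cases C with
  | nil => exact absurd hC not_isCycle_nil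
  | cons h' t =>
    have ht := ((cons_isCycle_iff t h').1 hC).1
    refine ⟨_, cons h t.reverse, ht.reverse.cons ?_, by simp⟩
    simp_all

lemma exists_isPath_length_eq (hG : G.Preconnected) (hC : C.IsCycle) (hz : z ∉ C.support) :
    ∃ (a b : V) (p : G.Walk a b), p.IsPath ∧ p.length = C.length := by
  classical
  obtain ⟨d, -, hd₁, hd₂⟩ :=
    (hG z v).some.exists_boundary_dart {x | x ∉ C.support} hz (by simp)
  simp only [Set.mem_ofPred_eq, not_not] at hd₁ hd₂
  obtain ⟨u, p, hp, hlen⟩ :=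
    (hC.rotate hd₂).exists_isPath_length_eq_of_adj d.adj (by simpa using hd₁)
  exact ⟨_, _, p, hp, by simpa using hlen⟩

lemma isHamiltonianCycle_of_forall_mem_support [DecidableEq V] (hC : C.IsCycle)
    (h : ∀ z, z ∈ C.support) :
    C.IsHamiltonianCycle := by
  refine ⟨hC, hC.isPath_tail.isHamiltonian_of_mem fun z => ?_⟩
  have hz := h z
  rw [← C.cons_support_tail hC.not_nil, List.mem_cons] at hz
  rcases hz with rfl | hz
  · exact C.tail.end_mem_support
  · exact hz

end IsCycle

end Walk

end SimpleGraph

theorem dirac_hamiltonian (G : SimpleGraph V) [Fintype V] [DecidableEq V] [DecidableRel G.Adj]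
    (hn : 3 ≤ Fintype.card V)
    (hδ : (G.minDegree : ℝ) ≥ (Fintype.card V : ℝ) / 2) :
    G.IsHamiltonian := by
  intro _
  replace hδ : Fintype.card V ≤ 2 * G.minDegree := by
    have : (Fintype.card V : ℝ) ≤ 2 * G.minDegree := by linarith
    exact_mod_cast this
  have : Nonempty V := Fintype.card_pos_iff.1 (by omega)
  obtain ⟨a, b, p, hp⟩ := Walk.exists_isLongestPath G
  have ha := G.minDegree_le_degree a
  have hb := G.minDegree_le_degree b
  have hlen : 1 < p.length := by
    have := hp.degree_start_le_length
    omega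
  have hdeg : p.length < G.degree a + G.degree b := by
    have := hp.1.length_lt
    omega
  obtain ⟨u, C, hC, hClen⟩ := hp.exists_isCycle_length_eq hlen hdeg
  refine ⟨u, C, hC.isHamiltonianCycle_of_forall_mem_support fun z => ?_⟩
  by_contra hz
  obtain ⟨c, d, q, hq, hqlen⟩ :=
    hC.exists_isPath_length_eq (preconnected_of_card_le_two_mul_minDegree hδ) hz
  have := hp.2 c d q hq
  omega
end

section
/- Every finite simple graph on at least 3 vertices with connectivity κ at least its independence number α is hamiltonian. -/
open SimpleGraph

variable {V : Type*}

/-!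
Take a longest cycle `C` and suppose some vertex `x` lies off it. Let `H` be the component of
`G - C` containing `x` and `S` the set of vertices of `C` with a neighbour in `H`. By maximality
of `C`, the successor on `C` of a vertex of `S` has no neighbour in `H`, and the successors of two
distinct vertices of `S` are not adjacent. Hence `x` together with these successors is an
independent set of size `|S| + 1`, while `S` separates `x` from the rest of `C`, so
`κ ≤ |S| < α`. A first cycle exists because `G` is either complete or has `α ≥ 2`, hence `κ ≥ 2`.
-/

namespace SimpleGraph.Walk

variable {G : SimpleGraph V} {u v w x : V}

lemma isPath_append_cons_iff {p : G.Walk u v} {q : G.Walk w x} (h : G.Adj v w) :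
    (p.append (cons h q)).IsPath ↔ p.IsPath ∧ q.IsPath ∧ p.support.Disjoint q.support := by
  simp only [isPath_def, support_append, support_cons, List.tail_cons, List.nodup_append']

lemma IsPath.isCycle_cons {p : G.Walk u v} (hp : p.IsPath) (h : G.Adj v u) (hlen : 2 ≤ p.length) :
    (cons h p).IsCycle :=
  isCycle_iff_isPath_tail_and_le_length.mpr ⟨by simpa using hp, by simp; omega⟩

lemma IsCycle.dart_eq_of_fst_eq {c : G.Walk v v} (hc : c.IsCycle) {d d' : G.Dart}
    (hd : d ∈ c.darts) (hd' : d' ∈ c.darts) (h : d.fst = d'.fst) : d = d' :=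
  List.inj_on_of_nodup_map (by rw [map_fst_darts]; exact hc.nodup_dropLast_support) hd hd' h

lemma IsCycle.dart_eq_of_snd_eq {c : G.Walk v v} (hc : c.IsCycle) {d d' : G.Dart}
    (hd : d ∈ c.darts) (hd' : d' ∈ c.darts) (h : d.snd = d'.snd) : d = d' :=
  List.inj_on_of_nodup_map (by rw [map_snd_darts]; exact hc.support_nodup) hd hd' h

lemma IsCycle.exists_mem_darts_fst_eq [DecidableEq V] {c : G.Walk v v} (hc : c.IsCycle)
    (hu : u ∈ c.support) :
    ∃ d ∈ c.darts, d.fst = u := by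
  have hR : ¬ (c.rotate u hu).Nil := by simpa using hc.not_nil
  exact ⟨_, (rotate_darts c u hu).perm.subset (firstDart_mem_darts hR), rfl⟩

lemma IsCycle.exists_eq_cons_of_darts_subset {c : G.Walk v v} (hc : c.IsCycle) {d : G.Dart}
    (hd : d ∈ c.darts) {p : G.Walk d.fst w} (hp : ¬ p.Nil) (hpc : p.darts ⊆ c.darts) :
    ∃ t : G.Walk d.snd w, p = cons d.adj t := by
  obtain ⟨⟨y, z⟩, hyz⟩ := d
  cases p with
  | nil => exact absurd Nil.nil hp
  | cons h t =>
    have hdart := hc.dart_eq_of_fst_eq (hpc (List.mem_cons_self ..)) hd rfl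
    simp only [Dart.mk.injEq, Prod.mk.injEq, true_and] at hdart
    subst hdart
    exact ⟨t, rfl⟩

lemma IsCycle.exists_isPath_of_mem_darts [DecidableEq V] {c : G.Walk v v} (hc : c.IsCycle)
    {d : G.Dart} (hd : d ∈ c.darts) :
    ∃ r : G.Walk d.snd d.fst, r.IsPath ∧ r.length + 1 = c.length ∧ r.darts ⊆ c.darts ∧
      ∀ y, y ∈ r.support ↔ y ∈ c.support := by
  have hu := c.dart_fst_mem_support_of_mem_darts hd
  have hR := hc.rotate hu
  obtain ⟨r, hr⟩ := hc.exists_eq_cons_of_darts_subset hd (by simpa using hc.not_nil)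
    (rotate_darts c _ hu).perm.subset
  rw [hr] at hR
  refine ⟨r, ((cons_isCycle_iff _ _).mp hR).1, ?_, ?_, fun y => ?_⟩
  · rw [← length_rotate c _ hu, hr, length_cons]
  · exact fun d' hd' => (rotate_darts c _ hu).perm.subset (hr ▸ List.mem_cons_of_mem _ hd')
  · rw [← mem_support_rotate_iff c _ hu, hr, support_cons, List.mem_cons, or_iff_right_of_imp]
    rintro rfl
    exact r.end_mem_support

lemma IsCycle.exists_isPath_append_cons [DecidableEq V] {c : G.Walk v v} (hc : c.IsCycle)
    {d d' : G.Dart} (hd : d ∈ c.darts) (hd' : d' ∈ c.darts) (hne : d ≠ d') :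
    ∃ (r₁ : G.Walk d.snd d'.fst) (r₂ : G.Walk d'.snd d.fst),
      (r₁.append (cons d'.adj r₂)).IsPath ∧ (r₁.append (cons d'.adj r₂)).length + 1 = c.length ∧
      ∀ y ∈ (r₁.append (cons d'.adj r₂)).support, y ∈ c.support := by
  obtain ⟨r, hr, hlen, hdarts, hsupp⟩ := hc.exists_isPath_of_mem_darts hd
  have hw : d'.fst ∈ r.support := (hsupp _).mpr (c.dart_fst_mem_support_of_mem_darts hd')
  have hfst : d'.fst ≠ d.fst := fun h => hne (hc.dart_eq_of_fst_eq hd hd' h.symm)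
  obtain ⟨r₂, hr₂⟩ := hc.exists_eq_cons_of_darts_subset hd' (not_nil_of_ne hfst)
    (List.Subset.trans (darts_dropUntil_subset_darts r hw) hdarts)
  refine ⟨r.takeUntil _ hw, r₂, ?_⟩
  rw [← hr₂, take_spec]
  exact ⟨hr, hlen, fun y hy => (hsupp y).mp hy⟩

lemma IsCycle.isHamiltonianCycle_of_mem [DecidableEq V] {c : G.Walk v v} (hc : c.IsCycle)
    (h : ∀ y, y ∈ c.support) : c.IsHamiltonianCycle := by
  refine ⟨hc, hc.isPath_tail.isHamiltonian_of_mem fun y => ?_⟩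
  have hy := h y
  rw [← cons_support_tail hc.not_nil, List.mem_cons] at hy
  exact hy.elim (· ▸ c.tail.end_mem_support) id

end SimpleGraph.Walk

namespace SimpleGraph

variable {G : SimpleGraph V}

/-- For `x ∉ K`, the vertex set of the component of `G - K` containing `x`. -/
def avoidingComponent (G : SimpleGraph V) (K : Set V) (x : V) : Set V :=
  {y | ∃ p : G.Walk x y, ∀ z ∈ p.support, z ∉ K}

open Classical in
noncomputable def attachments [Fintype V] (G : SimpleGraph V) (K : Set V) (x : V) : Finset V :=
  {y | y ∈ K ∧ ∃ z ∈ G.avoidingComponent K x, G.Adj y z}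

variable {K : Set V} {x a b : V}

lemma mem_avoidingComponent_self (hx : x ∉ K) : x ∈ G.avoidingComponent K x :=
  ⟨Walk.nil, by simpa using hx⟩

lemma mem_avoidingComponent_of_adj (ha : a ∈ G.avoidingComponent K x) (hab : G.Adj a b)
    (hb : b ∉ K) : b ∈ G.avoidingComponent K x := by
  obtain ⟨p, hp⟩ := ha
  refine ⟨p.concat hab, fun z hz => ?_⟩
  rw [Walk.support_concat, List.mem_append, List.mem_singleton] at hz
  rcases hz with hz | rfl
  exacts [hp z hz, hb]

lemma notMem_avoidingComponent {y : V} (hy : y ∈ K) : y ∉ G.avoidingComponent K x :=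
  fun ⟨p, hp⟩ => hp y p.end_mem_support hy

lemma exists_walk_of_mem_avoidingComponent (ha : a ∈ G.avoidingComponent K x)
    (hb : b ∈ G.avoidingComponent K x) : ∃ P : G.Walk a b, ∀ z ∈ P.support, z ∉ K := by
  obtain ⟨p, hp⟩ := ha
  obtain ⟨q, hq⟩ := hb
  refine ⟨p.reverse.append q, fun z hz => ?_⟩
  rw [Walk.mem_support_append_iff, Walk.support_reverse, List.mem_reverse] at hz
  rcases hz with hz | hz
  exacts [hp z hz, hq z hz]

lemma Reachable.exists_walk_of_induce {S : Set V} {x y : S} (h : (G.induce S).Reachable x y) :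
    ∃ p : G.Walk x y, ∀ z ∈ p.support, z ∈ S := by
  obtain ⟨p⟩ := h
  have hp : ∀ z ∈ (p.map (Embedding.induce S).toHom).support, z ∈ S := by
    simp only [Walk.support_map, List.mem_map]
    rintro _ ⟨z, -, rfl⟩
    exact z.2
  exact ⟨_, hp⟩

lemma mem_attachments [Fintype V] {y : V} :
    y ∈ G.attachments K x ↔ y ∈ K ∧ ∃ z ∈ G.avoidingComponent K x, G.Adj y z := by
  classical
  simp [attachments]

end SimpleGraph

section Connectivity

variable {G : SimpleGraph V} [Fintype V] [DecidableEq V] {k : ℕ} {K : Set V} {x : V}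

lemma kConnected_connectivity (G : SimpleGraph V) (h : 0 < Fintype.card V) :
    KConnected G (connectivity G) :=
  Nat.sSup_mem (s := {k | KConnected G k}) ⟨0, h, fun _ hS => absurd hS (Nat.not_lt_zero _)⟩
    ⟨Fintype.card V, fun _ hk => hk.1.le⟩

lemma card_le_indepNumber {s : Finset V} (hs : G.IsIndepSet s) : s.card ≤ indepNumber G := by
  refine le_csSup ⟨Fintype.card V, ?_⟩ ⟨s, fun u hu v hv huv => ?_, rfl⟩
  · rintro _ ⟨t, -, rfl⟩
    exact t.card_le_univ
  · obtain rfl | hne := eq_or_ne u v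
    exacts [huv.ne rfl, hs hu hv hne huv]

lemma KConnected.exists_walk_avoiding (hG : KConnected G k) {S : Finset V} (hS : S.card < k)
    {x y : V} (hx : x ∉ S) (hy : y ∉ S) : ∃ p : G.Walk x y, ∀ z ∈ p.support, z ∉ S :=
  ((hG.2 S hS).preconnected ⟨x, by simpa⟩ ⟨y, by simpa⟩).exists_walk_of_induce

lemma KConnected.le_card_attachments (hG : KConnected G k) (hx : x ∉ K) {c : V} (hc : c ∈ K)
    (hcA : c ∉ G.attachments K x) : k ≤ (G.attachments K x).card := by
  by_contra! hlt
  obtain ⟨p, hp⟩ := hG.exists_walk_avoiding hlt (fun h => hx (mem_attachments.mp h).1) hcA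
  obtain ⟨d, hd, hfst, hsnd⟩ := p.exists_boundary_dart _ (mem_avoidingComponent_self hx)
    (notMem_avoidingComponent hc)
  by_cases hK : d.snd ∈ K
  · exact hp _ (p.dart_snd_mem_support_of_mem_darts hd)
      (mem_attachments.mpr ⟨hK, d.fst, hfst, d.adj.symm⟩)
  · exact hsnd (mem_avoidingComponent_of_adj hfst d.adj hK)

lemma KConnected.le_degree [DecidableRel G.Adj] (hG : KConnected G k) (v : V) :
    k ≤ G.degree v := by
  by_contra! hlt
  have hcard : (insert v (G.neighborFinset v)).card < Finset.univ.card :=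
    calc (insert v (G.neighborFinset v)).card ≤ G.degree v + 1 := by
          simp
      _ ≤ k := hlt
      _ < Fintype.card V := hG.1
      _ = Finset.univ.card := Finset.card_univ.symm
  obtain ⟨z, -, hz⟩ := Finset.exists_mem_notMem_of_card_lt_card hcard
  rw [Finset.mem_insert, not_or] at hz
  obtain ⟨p, hp⟩ := hG.exists_walk_avoiding (S := G.neighborFinset v) (x := v)
    (by rwa [card_neighborFinset_eq_degree]) (by simp) hz.2
  have hnil : ¬ p.Nil := Walk.not_nil_of_ne (Ne.symm hz.1)
  exact hp _ (p.getVert_mem_support 1) ((mem_neighborFinset ..).mpr (p.adj_snd hnil))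

lemma KConnected.exists_isCycle (hG : KConnected G k) (hk : 2 ≤ k) :
    ∃ (v : V) (c : G.Walk v v), c.IsCycle := by
  classical
  obtain ⟨v⟩ : Nonempty V := Fintype.card_pos_iff.mp (by have := hG.1; omega)
  have hdeg : 1 < (G.neighborFinset v).card := by
    rw [card_neighborFinset_eq_degree]; have := hG.le_degree v; omega
  obtain ⟨u, hu, w, hw, huw⟩ := Finset.one_lt_card.mp hdeg
  rw [mem_neighborFinset] at hu hw
  obtain ⟨P, hP⟩ := hG.exists_walk_avoiding (S := {v}) (by simp; omega)
    (by simpa using hu.ne') (by simpa using hw.ne')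
  have hpath : (P.bypass.append (Walk.cons hw.symm Walk.nil)).IsPath :=
    (Walk.isPath_append_cons_iff _).mpr ⟨P.bypass_isPath, by simp,
      by simpa using fun h => hP v (P.support_bypass_subset_support h) (by simp)⟩
  have hlen : 1 ≤ P.bypass.length :=
    Walk.not_nil_iff_lt_length.mp (Walk.not_nil_of_ne huw)
  exact ⟨v, _, hpath.isCycle_cons hu (by simp; omega)⟩

end Connectivity

open Walk

section LongestCycle

variable {G : SimpleGraph V} {v : V} {C : G.Walk v v}

lemma exists_isLongestCycle [Fintype V] (h : ∃ (v : V) (c : G.Walk v v), c.IsCycle) :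
    ∃ (v : V) (c : G.Walk v v), IsLongestCycle c := by
  set lengths := {n | ∃ (v : V) (c : G.Walk v v), c.IsCycle ∧ c.length = n}
  have hbdd : BddAbove lengths := by
    refine ⟨Fintype.card V, ?_⟩
    rintro _ ⟨v, c, hc, rfl⟩
    simpa using hc.support_nodup.length_le_card
  obtain ⟨v, c, hc⟩ := h
  obtain ⟨w, C, hC, hlen⟩ := Nat.sSup_mem (s := lengths) ⟨_, v, c, hc, rfl⟩ hbdd
  exact ⟨w, C, hC, fun u c' hc' => hlen ▸ le_csSup hbdd ⟨u, c', hc', rfl⟩⟩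

-- Otherwise `u a ⋯ b u₁ ⋯ u`, where `d = (u, u₁)`, would be a longer cycle.
lemma IsLongestCycle.not_adj_snd [DecidableEq V] (hC : IsLongestCycle C) {d : G.Dart}
    (hd : d ∈ C.darts) {a b : V} (ha : G.Adj d.fst a) (P : G.Walk a b)
    (hP : ∀ z ∈ P.support, z ∉ C.support) : ¬ G.Adj b d.snd := by
  intro hb
  obtain ⟨r, hr, hlen, -, hsupp⟩ := hC.1.exists_isPath_of_mem_darts hd
  have hpath : (P.bypass.append (cons hb r)).IsPath :=
    (isPath_append_cons_iff hb).mpr ⟨P.bypass_isPath, hr, List.disjoint_left.mpr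
      fun y hy hy' => hP y (P.support_bypass_subset_support hy) ((hsupp y).mp hy')⟩
  have h3 := hC.1.three_le_length
  have hlonger := hC.2 _ _ (hpath.isCycle_cons ha (by simp; omega))
  simp only [length_cons, length_append] at hlonger
  omega

-- Otherwise `u a ⋯ b w ⋯ u₁ w₁ ⋯ u`, where `d = (u, u₁)` and `d' = (w, w₁)`, would be a
-- longer cycle.
lemma IsLongestCycle.not_adj_snd_snd [DecidableEq V] (hC : IsLongestCycle C) {d d' : G.Dart}
    (hd : d ∈ C.darts) (hd' : d' ∈ C.darts) (hne : d ≠ d') {a b : V} (ha : G.Adj d.fst a)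
    (hb : G.Adj d'.fst b) (P : G.Walk a b) (hP : ∀ z ∈ P.support, z ∉ C.support) :
    ¬ G.Adj d.snd d'.snd := by
  intro hs
  obtain ⟨r₁, r₂, hr, hlen, hsupp⟩ := hC.1.exists_isPath_append_cons hd hd' hne
  obtain ⟨hr₁, hr₂, hdisj⟩ := (isPath_append_cons_iff _).mp hr
  have harc : (r₁.reverse.append (cons hs r₂)).IsPath :=
    (isPath_append_cons_iff hs).mpr ⟨hr₁.reverse, hr₂, by simpa using hdisj⟩
  have hpath : (P.bypass.append (cons hb.symm (r₁.reverse.append (cons hs r₂)))).IsPath := by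
    refine (isPath_append_cons_iff _).mpr ⟨P.bypass_isPath, harc, List.disjoint_left.mpr
      fun y hy hy' => hP y (P.support_bypass_subset_support hy) (hsupp y ?_)⟩
    simpa [support_append, or_comm] using hy'
  have hlonger := hC.2 _ _ (hpath.isCycle_cons ha (by simp; omega))
  simp only [length_cons, length_append, length_reverse] at hlonger hlen
  omega

variable [Fintype V] [DecidableEq V] {x : V}

lemma IsLongestCycle.exists_mem_support_notMem_attachments (hC : IsLongestCycle C) :
    ∃ c ∈ C.support, c ∉ G.attachments {y | y ∈ C.support} x := by
  set d := C.firstDart hC.1.not_nil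
  have hd : d ∈ C.darts := firstDart_mem_darts _
  by_cases hfst : d.fst ∈ G.attachments {y | y ∈ C.support} x
  · refine ⟨d.snd, C.dart_snd_mem_support_of_mem_darts hd, fun hsnd => ?_⟩
    obtain ⟨-, a, ha, hda⟩ := mem_attachments.mp hfst
    obtain ⟨-, b, hb, hdb⟩ := mem_attachments.mp hsnd
    obtain ⟨P, hP⟩ := exists_walk_of_mem_avoidingComponent ha hb
    exact hC.not_adj_snd hd hda P hP hdb.symm
  · exact ⟨d.fst, C.dart_fst_mem_support_of_mem_darts hd, hfst⟩

lemma IsLongestCycle.isIndepSet_insert_image_snd (hC : IsLongestCycle C) (hx : x ∉ C.support) :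
    G.IsIndepSet (insert x
      ((·.snd) '' {d | d ∈ C.darts ∧ d.fst ∈ G.attachments {y | y ∈ C.support} x})) := by
  have hxA := mem_avoidingComponent_self (G := G) (K := {y | y ∈ C.support}) hx
  have hx_snd : ∀ d ∈ C.darts, d.fst ∈ G.attachments {y | y ∈ C.support} x →
      ¬ G.Adj x d.snd := by
    intro d hd hdA hadj
    obtain ⟨-, a, ha, hda⟩ := mem_attachments.mp hdA
    obtain ⟨P, hP⟩ := exists_walk_of_mem_avoidingComponent ha hxA
    exact hC.not_adj_snd hd hda P hP hadj
  refine Set.Pairwise.insert ?_ ?_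
  · rintro _ ⟨d, ⟨hd, hdA⟩, rfl⟩ _ ⟨d', ⟨hd', hdA'⟩, rfl⟩ hne
    obtain ⟨-, a, ha, hda⟩ := mem_attachments.mp hdA
    obtain ⟨-, b, hb, hdb⟩ := mem_attachments.mp hdA'
    obtain ⟨P, hP⟩ := exists_walk_of_mem_avoidingComponent ha hb
    exact hC.not_adj_snd_snd hd hd' (ne_of_apply_ne (·.snd) hne) hda hdb P hP
  · rintro _ ⟨d, ⟨hd, hdA⟩, rfl⟩ -
    exact ⟨hx_snd d hd hdA, fun h => hx_snd d hd hdA h.symm⟩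

lemma IsLongestCycle.card_attachments_lt_indepNumber (hC : IsLongestCycle C)
    (hx : x ∉ C.support) : (G.attachments {y | y ∈ C.support} x).card < indepNumber G := by
  classical
  set A := G.attachments {y | y ∈ C.support} x
  set D := C.darts.toFinset.filter (·.fst ∈ A)
  have hAD : A.card ≤ D.card := by
    refine Finset.card_le_card_of_surjOn (·.fst) fun y hy => ?_
    obtain ⟨d, hd, rfl⟩ := hC.1.exists_mem_darts_fst_eq (mem_attachments.mp hy).1
    exact ⟨d, Finset.mem_filter.mpr ⟨List.mem_toFinset.mpr hd, hy⟩, rfl⟩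
  have hDT : (D.image (·.snd)).card = D.card := Finset.card_image_of_injOn
    fun d hd d' hd' h => hC.1.dart_eq_of_snd_eq (by simp_all [D]) (by simp_all [D]) h
  have hxT : x ∉ D.image (·.snd) := by
    simp only [Finset.mem_image, not_exists, not_and]
    exact fun d hd h => hx (h ▸ C.dart_snd_mem_support_of_mem_darts (by simp_all [D]))
  have hT : G.IsIndepSet ↑(insert x (D.image (·.snd))) := by
    convert hC.isIndepSet_insert_image_snd hx using 2
    ext
    simp [D, A]
  calc A.card < (insert x (D.image (·.snd))).card := by
        rw [Finset.card_insert_of_notMem hxT]; omega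
    _ ≤ indepNumber G := card_le_indepNumber hT

lemma IsLongestCycle.mem_support (hC : IsLongestCycle C) {k : ℕ} (hG : KConnected G k)
    (hα : indepNumber G ≤ k) (x : V) : x ∈ C.support := by
  by_contra hx
  obtain ⟨c, hc, hcA⟩ := hC.exists_mem_support_notMem_attachments (x := x)
  have := hG.le_card_attachments (K := {y | y ∈ C.support}) hx hc hcA
  have := hC.card_attachments_lt_indepNumber hx
  omega

end LongestCycle

lemma exists_isCycle_of_indepNumber_le_connectivity [Fintype V] [DecidableEq V]
    {G : SimpleGraph V} (hn : 3 ≤ Fintype.card V) (h : indepNumber G ≤ connectivity G) :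
    ∃ (v : V) (c : G.Walk v v), c.IsCycle := by
  by_cases! hG : ∃ x y : V, x ≠ y ∧ ¬ G.Adj x y
  · obtain ⟨x, y, hxy, hnadj⟩ := hG
    have h2 := card_le_indepNumber (G := G) (s := {x, y}) <| by
      rw [Finset.coe_pair, isIndepSet_iff, Set.pairwise_pair]
      exact fun _ => ⟨hnadj, fun h => hnadj h.symm⟩
    rw [Finset.card_pair hxy] at h2
    exact (kConnected_connectivity G (by omega)).exists_isCycle (h2.trans h)
  · obtain ⟨x, y, z, hxy, hxz, hyz⟩ := Fintype.two_lt_card_iff.mp (by omega : 2 < Fintype.card V)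
    have hp : (cons (hG y z hyz) (cons (hG z x hxz.symm) nil)).IsPath := by
      simp [isPath_def, hyz, hxz.symm, hxy.symm]
    exact ⟨x, _, hp.isCycle_cons (hG x y hxy) (by simp)⟩

theorem chvatal_erdos (G : SimpleGraph V) [Fintype V] [DecidableEq V]
    (hn : 3 ≤ Fintype.card V)
    (h : indepNumber G ≤ connectivity G) :
    G.IsHamiltonian := by
  intro _
  obtain ⟨v, C, hC⟩ := exists_isLongestCycle (exists_isCycle_of_indepNumber_le_connectivity hn h)
  exact ⟨v, C, hC.1.isHamiltonianCycle_of_mem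
    (hC.mem_support (kConnected_connectivity G (by omega)) h)⟩
end

section
/- Every finite simple graph on n ≥ 3 vertices with minimum degree δ and at most δ² + δ − 1 edges is hamiltonian. -/
/-!
Summing degrees, `q ≤ δ² + δ - 1` forces `n ≤ 2δ + 1`. Then every non-spanning path can be
lengthened: either an end has a neighbour off the path, or by pigeonhole the end-neighbourhoods
cross (`x₀ ~ x_{k+1}` and `x_m ~ x_k`), so the path's vertices carry a cycle, and some outside
vertex sees that cycle because any two closed neighbourhoods (of size `≥ δ + 1`) meet. Hence `G`
has a Hamiltonian path, and for `n ≤ 2δ` its ends cross as well (Dirac).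

For `n = 2δ + 1` and `G` not Hamiltonian, every Hamiltonian path `x₀ … x_{2δ}` has, for each
`k < 2δ`, exactly one of `x₀ ~ x_{k+1}` and `x_{2δ} ~ x_k`. Applied to all Pósa rotations of the
path, this forces either a vertex adjacent to all others (as in `K₁ + 2K_δ`) or `δ` vertices
adjacent to `δ + 1` others (as in `K_{δ,δ+1}`). Either way the degree sum is at least
`2δ² + 2δ`, i.e. `q ≥ δ² + δ`.
-/

open SimpleGraph

variable {V : Type*}

theorem Nat.bijOn_Iic_of_injOn {m : ℕ} {σ : ℕ → ℕ} (hmaps : ∀ k ≤ m, σ k ≤ m)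
    (hinj : ∀ a ≤ m, ∀ b ≤ m, σ a = σ b → a = b) : Set.BijOn σ (Set.Iic m) (Set.Iic m) :=
  ((Set.finite_Iic m).injOn_iff_bijOn_of_mapsTo hmaps).mp hinj

open Finset in
theorem Nat.iff_lt_of_card_filter_range_eq {p : ℕ → Prop} [DecidablePred p] {n d : ℕ}
    (hdown : ∀ k, k + 1 < n → p (k + 1) → p k) (hcard : #{k ∈ range n | p k} = d)
    {k : ℕ} (hk : k < n) : p k ↔ k < d := by
  have hle : ∀ i j, i ≤ j → j < n → p j → p i := fun i j hij hj hp =>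
    Nat.decreasingInduction' (fun l hl _ => hdown l (by omega)) hij hp
  constructor
  · intro hp
    have hsub : range (k + 1) ⊆ {j ∈ range n | p j} := fun j hj => by
      rw [mem_range] at hj
      exact mem_filter.mpr ⟨mem_range.mpr (by omega), hle j k (by omega) hk hp⟩
    have := card_le_card hsub
    rw [card_range, hcard] at this
    omega
  · intro hkd
    by_contra hp
    have hsub : {j ∈ range n | p j} ⊆ range k := fun j hj => by
      rw [mem_filter, mem_range] at hj
      exact mem_range.mpr (by by_contra hjk; exact hp (hle k j (by omega) hj.1 hj.2))
    have := card_le_card hsub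
    rw [card_range, hcard] at this
    omega

namespace SimpleGraph

open Finset

variable {G : SimpleGraph V} {m : ℕ} {x : ℕ → V}

/-- Paths are handled as vertex sequences `x 0, …, x m`, so that rerouting a path
(reversal, Pósa rotation, rotating a cycle) is a reindexing of `[0, m]`. -/
structure IsPathSeq (G : SimpleGraph V) (m : ℕ) (x : ℕ → V) : Prop where
  injOn : Set.InjOn x (Set.Iic m)
  adj : ∀ i < m, G.Adj (x i) (x (i + 1))

def walkOfSeq (x : ℕ → V) :
    (m : ℕ) → (∀ i < m, G.Adj (x i) (x (i + 1))) → G.Walk (x 0) (x m)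
  | 0, _ => .nil
  | m + 1, h => (walkOfSeq x m fun i hi => h i (by omega)).concat (h m (by omega))

theorem support_walkOfSeq (x : ℕ → V) (m : ℕ) (h : ∀ i < m, G.Adj (x i) (x (i + 1))) :
    (walkOfSeq x m h).support = (List.range (m + 1)).map x := by
  induction m with
  | zero => rfl
  | succ m ih =>
    rw [walkOfSeq, Walk.support_concat, ih, List.range_succ (n := m + 1), List.map_append]
    rfl

theorem IsPathSeq.isHamiltonian [Fintype V] [DecidableEq V] (hx : G.IsPathSeq m x)
    (hn : Fintype.card V = m + 1) (hm : 2 ≤ m) (hclose : G.Adj (x m) (x 0)) :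
    G.IsHamiltonian := by
  have hsupp := support_walkOfSeq x m hx.adj
  set p := walkOfSeq x m hx.adj
  have hp : p.IsPath := by
    rw [Walk.isPath_def, hsupp]
    exact List.Nodup.map_on (fun a ha b hb => hx.injOn (Nat.le_of_lt_succ (List.mem_range.mp ha))
      (Nat.le_of_lt_succ (List.mem_range.mp hb))) List.nodup_range
  have hlen : p.length = m := by
    have := congrArg List.length hsupp
    rw [Walk.length_support, List.length_map, List.length_range] at this
    omega
  refine fun _ => ⟨x m, .cons hclose p, ?_⟩
  rw [Walk.isHamiltonianCycle_iff_isCycle_and_length_eq]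
  refine ⟨(Walk.cons_isCycle_iff p hclose).mpr ⟨hp, fun he => ?_⟩, by simp [hlen, hn]⟩
  have := hp.length_eq_one_of_mem_edges (Sym2.eq_swap ▸ he)
  omega

theorem IsPathSeq.exists_eq [Fintype V] (hx : G.IsPathSeq m x) (hn : Fintype.card V = m + 1)
    (v : V) : ∃ i ≤ m, x i = v := by
  have hinj : Function.Injective fun k : Fin (m + 1) => x k := fun a b hab =>
    Fin.ext (hx.injOn (Nat.le_of_lt_succ a.isLt) (Nat.le_of_lt_succ b.isLt) hab)
  obtain ⟨k, hk⟩ :=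
    ((Fintype.bijective_iff_injective_and_card _).mpr ⟨hinj, by simp [hn]⟩).2 v
  exact ⟨k, Nat.le_of_lt_succ k.isLt, hk⟩

theorem IsPathSeq.comp {σ : ℕ → ℕ} (hx : G.IsPathSeq m x)
    (hσ : Set.BijOn σ (Set.Iic m) (Set.Iic m))
    (hadj : ∀ k < m, G.Adj (x (σ k)) (x (σ (k + 1)))) :
    G.IsPathSeq m (x ∘ σ) :=
  ⟨hx.injOn.comp hσ.injOn hσ.mapsTo, hadj⟩

theorem IsPathSeq.reverse (hx : G.IsPathSeq m x) : G.IsPathSeq m fun k => x (m - k) :=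
  hx.comp (σ := (m - ·)) (Nat.bijOn_Iic_of_injOn (fun _ _ => by omega) fun _ _ _ _ _ => by omega)
    fun k hk => by
      simpa [show m - k = m - (k + 1) + 1 by omega] using (hx.adj (m - (k + 1)) (by omega)).symm

theorem IsPathSeq.snoc {w : V} (hx : G.IsPathSeq m x) (hw : ∀ i ≤ m, x i ≠ w)
    (h : G.Adj (x m) w) : G.IsPathSeq (m + 1) fun k => if k ≤ m then x k else w := by
  refine ⟨fun a ha b hb hab => ?_, fun k hk => ?_⟩
  · simp only [Set.mem_Iic] at ha hb
    split_ifs at hab with ha' hb' hb'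
    · exact hx.injOn ha' hb' hab
    · exact absurd hab (hw a ha')
    · exact absurd hab.symm (hw b hb')
    · omega
  · by_cases hkm : k < m
    · simpa [hkm.le, Nat.succ_le_of_lt hkm] using hx.adj k hkm
    · simpa [show k = m by omega] using h

/-- The Pósa rotation `x i, …, x 0, x (i + 1), …, x m`, a path when `x 0 ~ x (i + 1)`. -/
def posaRotation (x : ℕ → V) (i : ℕ) : ℕ → V := fun k => x (if k ≤ i then i - k else k)

theorem posaRotation_of_le {i k : ℕ} (h : k ≤ i) : posaRotation x i k = x (i - k) := by
  simp [posaRotation, h]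

theorem posaRotation_of_lt {i k : ℕ} (h : i < k) : posaRotation x i k = x k := by
  simp [posaRotation, h.not_ge]

theorem IsPathSeq.posaRotation {i : ℕ} (hx : G.IsPathSeq m x) (hi : i < m)
    (h : G.Adj (x 0) (x (i + 1))) : G.IsPathSeq m (posaRotation x i) := by
  refine hx.comp (Nat.bijOn_Iic_of_injOn (fun k _ => by split_ifs <;> omega)
    fun a _ b _ hab => by split_ifs at hab <;> omega) fun k hk => ?_
  rcases lt_trichotomy k i with hki | rfl | hki
  · simpa [hki.le, Nat.succ_le_of_lt hki, show i - k = i - (k + 1) + 1 by omega]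
      using (hx.adj (i - (k + 1)) (by omega)).symm
  · simpa using h
  · simpa [hki.not_ge, (hki.trans (Nat.lt_succ_self k)).not_ge] using hx.adj k hk

theorem IsPathSeq.isHamiltonian_of_crossing [Fintype V] [DecidableEq V] {k : ℕ}
    (hx : G.IsPathSeq m x) (hn : Fintype.card V = m + 1) (hm : 2 ≤ m) (hk : k < m)
    (h0 : G.Adj (x 0) (x (k + 1))) (h1 : G.Adj (x m) (x k)) : G.IsHamiltonian :=
  (hx.posaRotation hk h0).isHamiltonian hn hm <| by
    rwa [posaRotation_of_lt hk, posaRotation_of_le (Nat.zero_le k), Nat.sub_zero]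

theorem IsPathSeq.exists_succ_of_cycle {j : ℕ} {z : V} (hx : G.IsPathSeq m x)
    (hclose : G.Adj (x m) (x 0)) (hz : ∀ i ≤ m, x i ≠ z) (hj : j ≤ m) (h : G.Adj (x j) z) :
    ∃ y, G.IsPathSeq (m + 1) y := by
  -- go round the cycle `x` starting at `x (j + 1)`, so as to end at `x j`
  let σ : ℕ → ℕ := fun k => if k + j + 1 ≤ m then k + j + 1 else k + j - m
  have hσ : Set.BijOn σ (Set.Iic m) (Set.Iic m) :=
    Nat.bijOn_Iic_of_injOn (fun k _ => by simp only [σ]; split_ifs <;> omega)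
      fun a _ b _ hab => by simp only [σ] at hab; split_ifs at hab <;> omega
  have hy := hx.comp hσ fun k hk => by
    simp only [σ]
    split_ifs with h1 h2 h2
    · simpa [show k + 1 + j + 1 = k + j + 1 + 1 by omega] using hx.adj (k + j + 1) (by omega)
    · simpa [show k + j + 1 = m by omega, show k + 1 + j - m = 0 by omega] using hclose
    · omega
    · simpa [show k + 1 + j - m = k + j - m + 1 by omega] using hx.adj (k + j - m) (by omega)
  refine ⟨_, hy.snoc (fun i hi => hz _ (hσ.mapsTo hi)) ?_⟩
  simpa [σ] using h

section Degrees

variable [Fintype V] [DecidableEq V] [DecidableRel G.Adj]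

theorem degree_le_card_filter_adj_zero (h0 : ∀ w, G.Adj (x 0) w → ∃ i ≤ m, x i = w) :
    G.degree (x 0) ≤ #{k ∈ range m | G.Adj (x 0) (x (k + 1))} := by
  refine (card_le_card fun w hw => ?_).trans (card_image_le (f := fun k => x (k + 1)))
  have hadj := (mem_neighborFinset _ _ _).mp hw
  obtain ⟨i, hi, rfl⟩ := h0 w hadj
  obtain ⟨k, rfl⟩ : ∃ k, i = k + 1 :=
    Nat.exists_eq_succ_of_ne_zero (by rintro rfl; exact G.irrefl hadj)
  exact mem_image.mpr ⟨k, mem_filter.mpr ⟨mem_range.mpr (by omega), hadj⟩, rfl⟩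

theorem degree_le_card_filter_adj_last (hm : ∀ w, G.Adj (x m) w → ∃ i ≤ m, x i = w) :
    G.degree (x m) ≤ #{k ∈ range m | G.Adj (x m) (x k)} := by
  refine (card_le_card fun w hw => ?_).trans (card_image_le (f := x))
  have hadj := (mem_neighborFinset _ _ _).mp hw
  obtain ⟨i, hi, rfl⟩ := hm w hadj
  have him : i ≠ m := by rintro rfl; exact G.irrefl hadj
  exact mem_image.mpr ⟨i, mem_filter.mpr ⟨mem_range.mpr (by omega), hadj⟩, rfl⟩

theorem exists_crossing (h0 : ∀ w, G.Adj (x 0) w → ∃ i ≤ m, x i = w)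
    (hm : ∀ w, G.Adj (x m) w → ∃ i ≤ m, x i = w)
    (hdeg : m < G.degree (x 0) + G.degree (x m)) :
    ∃ k < m, G.Adj (x 0) (x (k + 1)) ∧ G.Adj (x m) (x k) := by
  by_contra! hno
  have hdisj : Disjoint {k ∈ range m | G.Adj (x 0) (x (k + 1))}
      {k ∈ range m | G.Adj (x m) (x k)} :=
    disjoint_filter.mpr fun k hk => hno k (mem_range.mp hk)
  have := card_le_card (union_subset (filter_subset (fun k => G.Adj (x 0) (x (k + 1))) _)
    (filter_subset (fun k => G.Adj (x m) (x k)) (range m)))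
  rw [card_union_of_disjoint hdisj, card_range] at this
  have := degree_le_card_filter_adj_zero h0
  have := degree_le_card_filter_adj_last hm
  omega

theorem IsPathSeq.card_le_degree (hx : G.IsPathSeq m x) {v : V} {s : Finset ℕ}
    (hs : ∀ k ∈ s, k ≤ m) (hadj : ∀ k ∈ s, G.Adj v (x k)) : #s ≤ G.degree v := by
  rw [← card_neighborFinset_eq_degree,
    ← card_image_of_injOn fun a ha b hb => hx.injOn (hs a ha) (hs b hb)]
  exact card_le_card fun w hw => by
    obtain ⟨k, hk, rfl⟩ := mem_image.mp hw
    exact (mem_neighborFinset _ _ _).mpr (hadj k hk)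

theorem card_mul_add_le_sum_degree {d e : ℕ} (hdeg : ∀ v, d ≤ G.degree v) (S : Finset V)
    (hS : ∀ v ∈ S, e ≤ G.degree v) :
    #S * e + (Fintype.card V - #S) * d ≤ ∑ v, G.degree v := by
  rw [← sum_add_sum_compl S, ← card_compl]
  exact add_le_add (by simpa using card_nsmul_le_sum S _ e hS)
    (by simpa using card_nsmul_le_sum Sᶜ _ d fun v _ => hdeg v)

variable {d : ℕ}

theorem exists_common_closed_neighbor (hdeg : ∀ v, d ≤ G.degree v)
    (hn : Fintype.card V ≤ 2 * d + 1) (u z : V) :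
    ∃ w, (w = u ∨ G.Adj u w) ∧ (w = z ∨ G.Adj z w) := by
  by_contra! h
  have hdisj : Disjoint (insert u (G.neighborFinset u)) (insert z (G.neighborFinset z)) := by
    refine Finset.disjoint_left.mpr fun w hu hz => ?_
    simp only [mem_insert, mem_neighborFinset] at hu hz
    exact absurd hz (by simpa using h w hu)
  have := card_le_univ (insert u (G.neighborFinset u) ∪ insert z (G.neighborFinset z))
  rw [card_union_of_disjoint hdisj, card_insert_of_notMem (by simp),
    card_insert_of_notMem (by simp), card_neighborFinset_eq_degree,
    card_neighborFinset_eq_degree] at this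
  linarith [hdeg u, hdeg z]

theorem IsPathSeq.exists_succ (hdeg : ∀ v, d ≤ G.degree v) (hn : Fintype.card V ≤ 2 * d + 1)
    (hx : G.IsPathSeq m x) (hm : m + 1 < Fintype.card V) : ∃ y, G.IsPathSeq (m + 1) y := by
  by_cases hlast : ∃ w, G.Adj (x m) w ∧ ∀ i ≤ m, x i ≠ w
  · obtain ⟨w, hw, hw'⟩ := hlast
    exact ⟨_, hx.snoc hw' hw⟩
  by_cases hzero : ∃ w, G.Adj (x 0) w ∧ ∀ i ≤ m, x i ≠ w
  · obtain ⟨w, hw, hw'⟩ := hzero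
    exact ⟨_, hx.reverse.snoc (fun i _ => hw' _ (Nat.sub_le m i)) (by simpa using hw)⟩
  push Not at hlast hzero
  obtain ⟨k, hk, h0, h1⟩ := exists_crossing hzero hlast (by linarith [hdeg (x 0), hdeg (x m)])
  obtain ⟨z, -, hz⟩ := exists_mem_notMem_of_card_lt_card (s := (range (m + 1)).image x)
    (t := univ) (card_image_le.trans_lt (by simpa using hm))
  replace hz : ∀ i ≤ m, x i ≠ z := fun i hi h =>
    hz (mem_image.mpr ⟨i, mem_range.mpr (Nat.lt_succ_of_le hi), h⟩)
  obtain ⟨w, hw0, hwz⟩ := exists_common_closed_neighbor hdeg hn (x 0) z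
  obtain ⟨i, hi, rfl⟩ : ∃ i ≤ m, x i = w :=
    hw0.elim (fun h => ⟨0, Nat.zero_le _, h.symm⟩) (hzero w)
  have hzi : G.Adj (x i) z := hwz.elim (fun h => absurd h (hz i hi)) fun h => h.symm
  refine (hx.posaRotation hk h0).exists_succ_of_cycle (j := if i ≤ k then k - i else i) (z := z)
    ?_ (fun j _ => hz _ (by split_ifs <;> omega)) (by split_ifs <;> omega) ?_
  · rwa [posaRotation_of_lt hk, posaRotation_of_le (Nat.zero_le k), Nat.sub_zero]
  · split_ifs with hik
    · rwa [posaRotation_of_le (Nat.sub_le k i), Nat.sub_sub_self hik]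
    · rwa [posaRotation_of_lt (not_le.mp hik)]

theorem exists_isPathSeq (hdeg : ∀ v, d ≤ G.degree v) (hn : Fintype.card V ≤ 2 * d + 1) :
    ∀ {m}, m < Fintype.card V → ∃ x, G.IsPathSeq m x
  | 0, h => by
    obtain ⟨v⟩ := Fintype.card_pos_iff.mp h
    exact ⟨fun _ => v, fun a ha b hb _ => (Nat.le_zero.mp ha).trans (Nat.le_zero.mp hb).symm,
      fun i hi => absurd hi (Nat.not_lt_zero i)⟩
  | _ + 1, h =>
    let ⟨_, hx⟩ := exists_isPathSeq hdeg hn (Nat.lt_of_succ_lt h)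
    hx.exists_succ hdeg hn h

theorem isHamiltonian_of_card_le_two_mul (hdeg : ∀ v, d ≤ G.degree v)
    (h3 : 3 ≤ Fintype.card V) (hn : Fintype.card V ≤ 2 * d) : G.IsHamiltonian := by
  have hcard : Fintype.card V = Fintype.card V - 1 + 1 := by omega
  obtain ⟨x, hx⟩ := exists_isPathSeq hdeg (by omega) (Nat.sub_one_lt_of_lt h3)
  obtain ⟨k, hk, h0, h1⟩ := exists_crossing (fun w _ => hx.exists_eq hcard w)
    (fun w _ => hx.exists_eq hcard w) (by linarith [hdeg (x 0), hdeg (x (Fintype.card V - 1))])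
  exact hx.isHamiltonian_of_crossing hcard (by omega) hk h0 h1

theorem IsPathSeq.adj_zero_succ_iff (hG : ¬ G.IsHamiltonian) (hn : Fintype.card V = 2 * d + 1)
    (hdeg : ∀ v, d ≤ G.degree v) (hx : G.IsPathSeq (2 * d) x) {k : ℕ} (hk : k < 2 * d) :
    G.Adj (x 0) (x (k + 1)) ↔ ¬ G.Adj (x (2 * d)) (x k) := by
  have hcross : ∀ j < 2 * d, G.Adj (x 0) (x (j + 1)) → ¬ G.Adj (x (2 * d)) (x j) :=
    fun j hj h0 h1 => hG (hx.isHamiltonian_of_crossing hn (by omega) hj h0 h1)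
  refine ⟨hcross k hk, fun h1 => ?_⟩
  by_contra h0
  have hsub : {j ∈ range (2 * d) | G.Adj (x 0) (x (j + 1))} ∪
      {j ∈ range (2 * d) | G.Adj (x (2 * d)) (x j)} ⊆ (range (2 * d)).erase k := by
    refine union_subset (fun j hj => ?_) (fun j hj => ?_) <;> rw [mem_filter] at hj <;>
      refine mem_erase.mpr ⟨?_, hj.1⟩ <;> rintro rfl <;> tauto
  have := card_le_card hsub
  rw [card_union_of_disjoint (disjoint_filter.mpr fun j hj => hcross j (mem_range.mp hj)),
    card_erase_of_mem (mem_range.mpr hk), card_range] at this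
  have := degree_le_card_filter_adj_zero (G := G) fun w _ => hx.exists_eq hn w
  have := degree_le_card_filter_adj_last (G := G) fun w _ => hx.exists_eq hn w
  have := hdeg (x 0)
  have := hdeg (x (2 * d))
  omega

theorem IsPathSeq.card_filter_adj_zero_succ (hG : ¬ G.IsHamiltonian)
    (hn : Fintype.card V = 2 * d + 1) (hdeg : ∀ v, d ≤ G.degree v)
    (hx : G.IsPathSeq (2 * d) x) :
    #{k ∈ range (2 * d) | G.Adj (x 0) (x (k + 1))} = d := by
  have hsplit := card_filter_add_card_filter_not (s := range (2 * d))
    (p := fun k => G.Adj (x 0) (x (k + 1)))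
  have hJ : {k ∈ range (2 * d) | ¬ G.Adj (x 0) (x (k + 1))} =
      {k ∈ range (2 * d) | G.Adj (x (2 * d)) (x k)} :=
    filter_congr fun k hk => by rw [hx.adj_zero_succ_iff hG hn hdeg (mem_range.mp hk), not_not]
  rw [hJ, card_range] at hsplit
  have := degree_le_card_filter_adj_zero (G := G) fun w _ => hx.exists_eq hn w
  have := degree_le_card_filter_adj_last (G := G) fun w _ => hx.exists_eq hn w
  have := hdeg (x 0)
  have := hdeg (x (2 * d))
  omega

theorem IsPathSeq.adj_iff_adj_zero_of_lt (hG : ¬ G.IsHamiltonian)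
    (hn : Fintype.card V = 2 * d + 1) (hdeg : ∀ v, d ≤ G.degree v) (hx : G.IsPathSeq (2 * d) x)
    {i j : ℕ} (hi : i < 2 * d) (h : G.Adj (x 0) (x (i + 1))) (hji : j < i) :
    G.Adj (x i) (x j) ↔ G.Adj (x 0) (x (j + 1 + 1)) := by
  -- the Pósa rotation at `i` starts at `x i` and still ends at `x (2 * d)`
  have hy := (hx.posaRotation hi h).adj_zero_succ_iff hG hn hdeg (k := i - 1 - j) (by omega)
  rw [posaRotation_of_le (Nat.zero_le i), posaRotation_of_le (by omega : i - 1 - j + 1 ≤ i),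
    posaRotation_of_lt hi, posaRotation_of_le (by omega : i - 1 - j ≤ i), Nat.sub_zero,
    show i - (i - 1 - j + 1) = j by omega, show i - (i - 1 - j) = j + 1 by omega] at hy
  rw [hy, hx.adj_zero_succ_iff hG hn hdeg (by omega : j + 1 < 2 * d)]

theorem IsPathSeq.adj_iff_adj_zero_of_gt (hG : ¬ G.IsHamiltonian)
    (hn : Fintype.card V = 2 * d + 1) (hdeg : ∀ v, d ≤ G.degree v) (hx : G.IsPathSeq (2 * d) x)
    {i k : ℕ} (h : G.Adj (x 0) (x (i + 1))) (hik : i < k) (hk : k < 2 * d) :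
    G.Adj (x i) (x (k + 1)) ↔ G.Adj (x 0) (x (k + 1)) := by
  have hy := (hx.posaRotation (hik.trans hk) h).adj_zero_succ_iff hG hn hdeg hk
  rw [posaRotation_of_le (Nat.zero_le i), Nat.sub_zero, posaRotation_of_lt (by omega : i < k + 1),
    posaRotation_of_lt (hik.trans hk), posaRotation_of_lt hik] at hy
  rw [hy, hx.adj_zero_succ_iff hG hn hdeg hk]

theorem IsPathSeq.adj_zero_succ_iff_lt (hG : ¬ G.IsHamiltonian)
    (hn : Fintype.card V = 2 * d + 1) (hdeg : ∀ v, d ≤ G.degree v) (hx : G.IsPathSeq (2 * d) x)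
    {i : ℕ} (hi : i + 1 < 2 * d) (h0 : G.Adj (x 0) (x (i + 1)))
    (h1 : G.Adj (x 0) (x (i + 1 + 1))) {k : ℕ} (hk : k < 2 * d) :
    G.Adj (x 0) (x (k + 1)) ↔ k < d := by
  have hup : ∀ j ≤ i + 1, G.Adj (x 0) (x (j + 1)) := by
    intro j hj
    induction j with
    | zero => simpa using hx.adj 0 (by omega)
    | succ j ih =>
      rcases Nat.lt_or_ge j i with hji | hji
      · have := (hx.adj_iff_adj_zero_of_gt hG hn hdeg (ih (by omega)) hji (by omega)).mpr h0
        exact (hx.adj_iff_adj_zero_of_lt hG hn hdeg hi h1 (by omega)).mp this.symm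
      · obtain rfl : j = i := by omega
        exact h1
  refine Nat.iff_lt_of_card_filter_range_eq (fun k hk hp => ?_)
    (hx.card_filter_adj_zero_succ hG hn hdeg) hk
  rcases Nat.lt_or_ge i k with hik | hki
  · have := (hx.adj_iff_adj_zero_of_lt hG hn hdeg hk hp (by omega : i < k + 1)).mpr h1
    exact (hx.adj_iff_adj_zero_of_gt hG hn hdeg h0 hik (by omega)).mp this.symm
  · exact hup k (by omega)

theorem IsPathSeq.adj_middle (hG : ¬ G.IsHamiltonian)
    (hn : Fintype.card V = 2 * d + 1) (hdeg : ∀ v, d ≤ G.degree v) (hx : G.IsPathSeq (2 * d) x)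
    {i : ℕ} (hi : i + 1 < 2 * d) (h0 : G.Adj (x 0) (x (i + 1)))
    (h1 : G.Adj (x 0) (x (i + 1 + 1))) {j : ℕ} (hj : j < d) : G.Adj (x j) (x d) := by
  have hA := fun k hk => hx.adj_zero_succ_iff_lt hG hn hdeg hi h0 h1 (k := k) hk
  rcases Nat.lt_or_ge (j + 1) d with hjd | hjd
  · have := (hx.adj_iff_adj_zero_of_gt hG hn hdeg ((hA j (by omega)).mpr hj) (by omega)
      (by omega)).mpr ((hA (d - 1) (by omega)).mpr (by omega))
    rwa [Nat.sub_add_cancel (by omega)] at this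
  · obtain rfl : d = j + 1 := by omega
    exact hx.adj j (by omega)

theorem IsPathSeq.two_mul_le_degree (hG : ¬ G.IsHamiltonian)
    (hn : Fintype.card V = 2 * d + 1) (hdeg : ∀ v, d ≤ G.degree v) (hx : G.IsPathSeq (2 * d) x)
    {i : ℕ} (hi : i + 1 < 2 * d) (h0 : G.Adj (x 0) (x (i + 1)))
    (h1 : G.Adj (x 0) (x (i + 1 + 1))) : 2 * d ≤ G.degree (x d) := by
  have hA := fun k hk => hx.adj_zero_succ_iff_lt hG hn hdeg hi h0 h1 (k := k) hk
  have hd : 2 ≤ d := by have := (hA (i + 1) hi).mp h1; omega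
  -- the reversed path satisfies the hypotheses with `i = 0`, which covers the `x j` with `j > d`
  have h1rev : G.Adj (x (2 * d)) (x (2 * d - 2)) := by
    have := hx.adj_zero_succ_iff hG hn hdeg (k := 2 * d - 2) (by omega)
    have : ¬ 2 * d - 2 < d := by omega
    have := hA (2 * d - 2) (by omega)
    tauto
  have hrev : ∀ j < d, G.Adj (x (2 * d - j)) (x d) := fun j hj => by
    have := hx.reverse.adj_middle hG hn hdeg (i := 0) (by omega) (hx.reverse.adj 0 (by omega))
      h1rev hj
    rwa [show 2 * d - d = d by omega] at this
  calc 2 * d = #((range (2 * d + 1)).erase d) := by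
        rw [card_erase_of_mem (mem_range.mpr (by omega)), card_range]; omega
    _ ≤ G.degree (x d) := hx.card_le_degree (fun k hk => by simp at hk; omega) fun k hk => by
      rw [mem_erase, mem_range] at hk
      rcases lt_or_gt_of_ne hk.1 with hkd | hkd
      · exact (hx.adj_middle hG hn hdeg hi h0 h1 hkd).symm
      · simpa [show 2 * d - (2 * d - k) = k by omega] using (hrev (2 * d - k) (by omega)).symm

theorem IsPathSeq.adj_odd_even (hG : ¬ G.IsHamiltonian)
    (hn : Fintype.card V = 2 * d + 1) (hdeg : ∀ v, d ≤ G.degree v) (hx : G.IsPathSeq (2 * d) x)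
    (halt : ∀ k < 2 * d, (G.Adj (x 0) (x (k + 1)) ↔ k % 2 = 0)) {i j : ℕ} (hj : j < d)
    (hi : i ≤ d) : G.Adj (x (2 * j + 1)) (x (2 * i)) := by
  rcases hi.lt_or_eq with hid | hid
  · have hA : G.Adj (x 0) (x (2 * i + 1)) := (halt (2 * i) (by omega)).mpr (by omega)
    rcases lt_trichotomy j i with hji | rfl | hij
    · exact ((hx.adj_iff_adj_zero_of_lt hG hn hdeg (by omega) hA (by omega)).mpr
        ((halt (2 * j + 1 + 1) (by omega)).mpr (by omega))).symm
    · exact (hx.adj (2 * j) (by omega)).symm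
    · exact ((hx.adj_iff_adj_zero_of_gt hG hn hdeg hA (by omega) (by omega)).mpr
        ((halt (2 * j) (by omega)).mpr (by omega))).symm
  · rw [hid]
    have := hx.adj_zero_succ_iff hG hn hdeg (k := 2 * j + 1) (by omega)
    have := halt (2 * j + 1) (by omega)
    have : (2 * j + 1) % 2 ≠ 0 := by omega
    exact (show G.Adj (x (2 * d)) (x (2 * j + 1)) by tauto).symm

theorem IsPathSeq.exists_two_mul_le_degree (hG : ¬ G.IsHamiltonian)
    (hn : Fintype.card V = 2 * d + 1) (hdeg : ∀ v, d ≤ G.degree v) (hx : G.IsPathSeq (2 * d) x)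
    {i : ℕ} (hi : i + 1 < 2 * d)
    (hiff : G.Adj (x 0) (x (i + 1)) ↔ G.Adj (x 0) (x (i + 1 + 1))) :
    ∃ v, 2 * d ≤ G.degree v := by
  by_cases h0 : G.Adj (x 0) (x (i + 1))
  · exact ⟨_, hx.two_mul_le_degree hG hn hdeg hi h0 (hiff.mp h0)⟩
  -- two consecutive misses for `x 0` are two consecutive hits for the reversed path
  have := hx.adj_zero_succ_iff hG hn hdeg (k := i) (by omega)
  have := hx.adj_zero_succ_iff hG hn hdeg (k := i + 1) hi
  refine ⟨_, hx.reverse.two_mul_le_degree hG hn hdeg (i := 2 * d - 2 - i) (by omega) ?_ ?_⟩ <;>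
    simp only [Nat.sub_zero, show 2 * d - (2 * d - 2 - i + 1) = i + 1 by omega,
      show 2 * d - (2 * d - 2 - i + 1 + 1) = i by omega] <;> tauto

theorem IsPathSeq.succ_le_degree_odd (hG : ¬ G.IsHamiltonian)
    (hn : Fintype.card V = 2 * d + 1) (hdeg : ∀ v, d ≤ G.degree v) (hx : G.IsPathSeq (2 * d) x)
    (halt : ∀ k < 2 * d, (G.Adj (x 0) (x (k + 1)) ↔ k % 2 = 0)) {j : ℕ} (hj : j < d) :
    d + 1 ≤ G.degree (x (2 * j + 1)) :=
  calc d + 1 = #((range (d + 1)).image (2 * ·)) := by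
        rw [card_image_of_injective _ (mul_right_injective₀ two_ne_zero), card_range]
    _ ≤ _ := hx.card_le_degree (fun k hk => by simp at hk; omega) fun k hk => by
        obtain ⟨i, hi, rfl⟩ := mem_image.mp hk
        exact hx.adj_odd_even hG hn hdeg halt hj (by simp at hi; omega)

theorem two_mul_add_le_sum_degree (hG : ¬ G.IsHamiltonian) (hn : Fintype.card V = 2 * d + 1)
    (hdeg : ∀ v, d ≤ G.degree v) : 2 * (d * d + d) ≤ ∑ v, G.degree v := by
  obtain ⟨x, hx⟩ := exists_isPathSeq hdeg hn.le (by omega : 2 * d < Fintype.card V)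
  by_cases hcons :
      ∃ i, i + 1 < 2 * d ∧ (G.Adj (x 0) (x (i + 1)) ↔ G.Adj (x 0) (x (i + 1 + 1)))
  · obtain ⟨i, hi, hiff⟩ := hcons
    obtain ⟨v, hv⟩ := hx.exists_two_mul_le_degree hG hn hdeg hi hiff
    have := card_mul_add_le_sum_degree hdeg {v} (by simpa using hv)
    rw [card_singleton, hn, show 2 * d + 1 - 1 = 2 * d by omega] at this
    linarith
  push Not at hcons
  have halt : ∀ k < 2 * d, (G.Adj (x 0) (x (k + 1)) ↔ k % 2 = 0) := by
    intro k hk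
    induction k with
    | zero => simpa using hx.adj 0 hk
    | succ k ih =>
      have := hcons k hk
      have := ih (by omega)
      have : (k + 1) % 2 = 0 ↔ k % 2 ≠ 0 := by omega
      tauto
  have := card_mul_add_le_sum_degree hdeg ((range d).image fun j => x (2 * j + 1)) (e := d + 1)
    fun v hv => by
      obtain ⟨j, hj, rfl⟩ := mem_image.mp hv
      exact hx.succ_le_degree_odd hG hn hdeg halt (mem_range.mp hj)
  rw [card_image_of_injOn (fun a ha b hb hab => by
      have := hx.injOn (by simp at ha; omega : 2 * a + 1 ≤ 2 * d)
        (by simp at hb; omega : 2 * b + 1 ≤ 2 * d) hab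
      omega), card_range, hn, show 2 * d + 1 - d = d + 1 by omega] at this
  linarith

end Degrees

end SimpleGraph

theorem nikoghosyan_2011_size (G : SimpleGraph V) [Fintype V] [DecidableEq V] [DecidableRel G.Adj]
    [Fintype G.edgeSet]
    (hn : 3 ≤ Fintype.card V)
    (hq : (G.edgeFinset.card : ℤ) ≤ (G.minDegree : ℤ) ^ 2 + G.minDegree - 1) :
    G.IsHamiltonian := by
  have hδ : ∀ v, G.minDegree ≤ G.degree v := G.minDegree_le_degree
  have hsum : ∑ v, G.degree v = 2 * G.edgeFinset.card := by
    convert G.sum_degrees_eq_twice_card_edges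
  have hcard : Fintype.card V ≤ 2 * G.minDegree + 1 := by
    by_contra! h
    have hlow := Finset.card_nsmul_le_sum Finset.univ (fun v => G.degree v) _ fun v _ => hδ v
    have := Nat.mul_le_mul_right G.minDegree h
    simp only [Finset.card_univ, smul_eq_mul, hsum] at hlow
    zify at hlow this
    nlinarith
  by_contra hG
  rcases hcard.lt_or_eq with hlt | heq
  · exact hG (isHamiltonian_of_card_le_two_mul hδ hn (by omega))
  · have := hsum ▸ two_mul_add_le_sum_degree hG heq hδ
    zify at this
    nlinarith
end
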